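/- arXiv:1401.7969 — 6 statements merged into one kernel-verified Lean document; each statement's English description precedes it below -/
import Mathlib

section
/- Let (X,μ) be a finite measure space, S : X → ℝ measurable, and suppose there are constants C₀ > 0, δ > 0 and d ∈ {0,1} such that μ({x : |S(x)| < ε}) ≤ C₀ ε^δ (ln(1/ε))^d for all 0 < ε < 1/2. Let p ∈ (0,1] and suppose δ < p. Then there is a constant C > 0, depending only on C₀, δ, d, p and μ(X), such that for all λ ≥ 2, ∫_X min(1, (λ|S(x)|)^{-p}) dμ(x) ≤ C λ^{-δ} (ln λ)^d. -/
open MeasureTheory Topology Filter Set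

/-!
Cut `X` at the dyadic scales `ε_k = 2^k / (2λ)`, `0 ≤ k ≤ K`, where `2^K ≤ λ/2 < 2^(K+1)`.
Outside `{|S| < ε_k}` the integrand is at most `(λ ε_k)^(-p) ≍ 2^(-kp)`, while the hypothesis
bounds `μ{|S| < ε_k}` by `C₀ 2^d ε_k^δ (log λ)^d ≍ 2^(kδ) λ^(-δ) (log λ)^d`, since `ε_k < 1/2`
and `log (1/ε_k) ≤ 2 log λ`. The resulting weights `2^(k(δ-p))` form a convergent geometric
series because `δ < p`, and the region beyond the last scale contributes
`O(λ^(-p) μ(X)) = O(λ^(-δ) μ(X))`.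
-/

open Finset in
theorem le_sum_indicator_add_of_le {X : Type*} {F : X → ℝ} {A : ℕ → Set X} {w : ℕ → ℝ}
    (hw : ∀ k, 0 ≤ w k) (hF : ∀ x, F x ≤ w 0) (hFA : ∀ k x, x ∉ A k → F x ≤ w (k + 1))
    (K : ℕ) (x : X) :
    F x ≤ ∑ k ∈ range (K + 1), w k * (A k).indicator 1 x + w (K + 1) := by
  have hterm : ∀ k, 0 ≤ w k * (A k).indicator 1 x := fun k =>
    mul_nonneg (hw k) (Set.indicator_nonneg (fun _ _ => zero_le_one) x)
  induction K with
  | zero =>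
    by_cases hx : x ∈ A 0
    · simp only [zero_add, sum_range_one, indicator_of_mem hx, Pi.one_apply, mul_one]
      linarith [hF x, hw 1]
    · simpa [hx] using hFA 0 x hx
  | succ K ih =>
    rw [sum_range_succ]
    by_cases hx : x ∈ A (K + 1)
    · rw [indicator_of_mem hx, Pi.one_apply, mul_one]
      linarith [hw (K + 2)]
    · linarith [hFA _ x hx, hterm (K + 1), sum_nonneg fun k (_ : k ∈ range (K + 1)) => hterm k]

open Finset in
theorem integral_le_sum_measureReal_add {X : Type*} [MeasurableSpace X] (μ : Measure X)
    [IsFiniteMeasure μ] {F : X → ℝ} {A : ℕ → Set X} {w : ℕ → ℝ}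
    (hA : ∀ k, MeasurableSet (A k)) (hF0 : ∀ x, 0 ≤ F x)
    (hw : ∀ k, 0 ≤ w k) (hF : ∀ x, F x ≤ w 0) (hFA : ∀ k x, x ∉ A k → F x ≤ w (k + 1))
    (K : ℕ) :
    ∫ x, F x ∂μ ≤ ∑ k ∈ range (K + 1), w k * μ.real (A k) + w (K + 1) * μ.real univ := by
  have hint : ∀ k, Integrable (fun x => w k * (A k).indicator 1 x) μ := fun k =>
    ((integrable_indicator_iff (hA k)).2 (integrableOn_const (measure_ne_top μ _))).const_mul _
  calc ∫ x, F x ∂μ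
      ≤ ∫ x, (∑ k ∈ range (K + 1), w k * (A k).indicator 1 x + w (K + 1)) ∂μ :=
        integral_mono_of_nonneg (.of_forall hF0)
          ((integrable_finsetSum _ fun k _ => hint k).add (integrable_const _))
          (.of_forall (le_sum_indicator_add_of_le hw hF hFA K))
    _ = _ := by
        rw [integral_add (integrable_finsetSum _ fun k _ => hint k) (integrable_const _),
          integral_finsetSum _ fun k _ => hint k, integral_const, smul_eq_mul, mul_comm _ (w _)]
        simp only [integral_const_mul, integral_indicator_one (hA _)]

/-- `min 1 ((λ |s|)^(-p))`, set to `1` by hand at `s = 0`, where Lean's `0 ^ (-p)` is `0`. -/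
noncomputable def cappedDecay (p lam s : ℝ) : ℝ := if s = 0 then 1 else min 1 ((lam * |s|) ^ (-p))

section cappedDecay

variable {p lam s : ℝ}

theorem cappedDecay_nonneg (hlam : 0 ≤ lam) : 0 ≤ cappedDecay p lam s := by
  unfold cappedDecay
  split_ifs
  · exact zero_le_one
  · exact le_min zero_le_one (by positivity)

theorem cappedDecay_le_one : cappedDecay p lam s ≤ 1 := by
  unfold cappedDecay
  split_ifs
  · exact le_rfl
  · exact min_le_left _ _

theorem cappedDecay_le_of_le {a : ℝ} (hp : 0 ≤ p) (hlam : 0 < lam) (ha : 0 < a) (has : a ≤ |s|) :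
    cappedDecay p lam s ≤ (lam * a)⁻¹ ^ p := by
  have hs : s ≠ 0 := abs_pos.mp (ha.trans_le has)
  rw [cappedDecay, if_neg hs, Real.inv_rpow (by positivity), ← Real.rpow_neg (by positivity)]
  exact (min_le_right _ _).trans <| Real.rpow_le_rpow_of_nonpos (by positivity)
    (mul_le_mul_of_nonneg_left has hlam.le) (neg_nonpos.mpr hp)

end cappedDecay

theorem log_one_div_le_two_mul_log {lam ε : ℝ} (hlam : 2 ≤ lam) (hε : 1 / (2 * lam) ≤ ε) :
    Real.log (1 / ε) ≤ 2 * Real.log lam := by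
  have hε0 : 0 < ε := lt_of_lt_of_le (by positivity) hε
  calc Real.log (1 / ε) ≤ Real.log (2 * lam) :=
        Real.log_le_log (by positivity) ((one_div_le hε0 (by positivity)).mpr hε)
    _ = Real.log 2 + Real.log lam := Real.log_mul two_ne_zero (by positivity)
    _ ≤ 2 * Real.log lam := by linarith [Real.log_le_log two_pos hlam]

theorem two_rpow_div_two_rpow_lt_one {δ p : ℝ} (hδp : δ < p) : (2 : ℝ) ^ δ / 2 ^ p < 1 :=
  (div_lt_one (by positivity)).mpr (Real.rpow_lt_rpow_of_exponent_lt one_lt_two hδp)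

open Finset in
theorem sum_four_div_two_pow_rpow_mul_rpow_le {p δ lam : ℝ} (hδp : δ < p) (hlam : 0 < lam) (n : ℕ) :
    ∑ k ∈ range n, (4 / 2 ^ k) ^ p * (2 ^ k / (2 * lam)) ^ δ ≤
      4 ^ p / (2 ^ δ * (1 - 2 ^ δ / 2 ^ p)) * lam ^ (-δ) := by
  set θ : ℝ := 2 ^ δ / 2 ^ p
  have hθ1 : θ < 1 := two_rpow_div_two_rpow_lt_one hδp
  have hterm : ∀ k : ℕ, (4 / 2 ^ k : ℝ) ^ p * (2 ^ k / (2 * lam)) ^ δ =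
      4 ^ p / (2 ^ δ * lam ^ δ) * θ ^ k := by
    intro k
    rw [Real.div_rpow (by norm_num) (by positivity), Real.div_rpow (by positivity) (by positivity),
      Real.mul_rpow (by norm_num) hlam.le, ← Real.rpow_pow_comm (by norm_num),
      ← Real.rpow_pow_comm (by norm_num), div_pow]
    field_simp
  rw [Real.rpow_neg hlam.le]
  calc ∑ k ∈ range n, (4 / 2 ^ k : ℝ) ^ p * (2 ^ k / (2 * lam)) ^ δ
      = 4 ^ p / (2 ^ δ * lam ^ δ) * ∑ k ∈ range n, θ ^ k := by
        simp only [hterm, mul_sum]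
    _ ≤ 4 ^ p / (2 ^ δ * lam ^ δ) * (1 - θ)⁻¹ := by
        gcongr
        simpa [← range_eq_Ico] using geom_sum_Ico_le_of_lt_one (m := 0) (n := n) (by positivity) hθ1
    _ = _ := by field_simp

section Sublevel

variable {X : Type*} [MeasurableSpace X] {μ : Measure X} {S : X → ℝ} {C₀ δ : ℝ} {d : ℕ}

theorem measureReal_abs_lt_le
    (hsub : ∀ ε : ℝ, 0 < ε → ε < 1 / 2 →
      (μ {x | |S x| < ε}).toReal ≤ C₀ * ε ^ δ * Real.log (1 / ε) ^ d)
    (hC₀ : 0 ≤ C₀) {lam ε : ℝ} (hlam : 2 ≤ lam) (hε : 1 / (2 * lam) ≤ ε) (hε' : ε < 1 / 2) :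
    μ.real {x | |S x| < ε} ≤ C₀ * 2 ^ d * ε ^ δ * Real.log lam ^ d := by
  have hε0 : 0 < ε := lt_of_lt_of_le (by positivity) hε
  have hlog : 0 ≤ Real.log (1 / ε) := Real.log_nonneg (by rw [le_div_iff₀ hε0]; linarith)
  calc μ.real {x | |S x| < ε} ≤ C₀ * ε ^ δ * Real.log (1 / ε) ^ d := hsub ε hε0 hε'
    _ ≤ C₀ * ε ^ δ * (2 * Real.log lam) ^ d := by
        gcongr
        exact log_one_div_le_two_mul_log hlam hε
    _ = C₀ * 2 ^ d * ε ^ δ * Real.log lam ^ d := by ring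

open Finset in
theorem sum_rpow_mul_measureReal_abs_lt_le
    (hsub : ∀ ε : ℝ, 0 < ε → ε < 1 / 2 →
      (μ {x | |S x| < ε}).toReal ≤ C₀ * ε ^ δ * Real.log (1 / ε) ^ d)
    (hC₀ : 0 ≤ C₀) {p lam : ℝ} (hδp : δ < p) (hlam : 2 ≤ lam) {K : ℕ} (hK : 2 ^ K ≤ lam / 2) :
    ∑ k ∈ range (K + 1), (4 / 2 ^ k) ^ p * μ.real {x | |S x| < 2 ^ k / (2 * lam)} ≤
      4 ^ p * 2 ^ d * C₀ / (2 ^ δ * (1 - 2 ^ δ / 2 ^ p)) * lam ^ (-δ) * Real.log lam ^ d := by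
  have hlam0 : 0 < lam := by linarith
  have hlog : 0 ≤ Real.log lam := Real.log_nonneg (by linarith)
  calc ∑ k ∈ range (K + 1), (4 / 2 ^ k) ^ p * μ.real {x | |S x| < 2 ^ k / (2 * lam)}
      ≤ ∑ k ∈ range (K + 1),
          (4 / 2 ^ k) ^ p * (C₀ * 2 ^ d * (2 ^ k / (2 * lam)) ^ δ * Real.log lam ^ d) := by
        gcongr with k hk
        have hkK : (2 : ℝ) ^ k ≤ 2 ^ K :=
          pow_le_pow_right₀ one_le_two (Nat.lt_succ_iff.mp (mem_range.mp hk))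
        refine measureReal_abs_lt_le hsub hC₀ hlam ?_ ?_
        · gcongr
          exact one_le_pow₀ one_le_two
        · rw [div_lt_iff₀ (by positivity)]
          linarith
    _ = C₀ * 2 ^ d * Real.log lam ^ d *
          ∑ k ∈ range (K + 1), (4 / 2 ^ k) ^ p * (2 ^ k / (2 * lam)) ^ δ := by
        rw [mul_sum]
        exact sum_congr rfl fun k _ => by ring
    _ ≤ C₀ * 2 ^ d * Real.log lam ^ d *
          (4 ^ p / (2 ^ δ * (1 - 2 ^ δ / 2 ^ p)) * lam ^ (-δ)) := by
        gcongr
        exact sum_four_div_two_pow_rpow_mul_rpow_le hδp hlam0 _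
    _ = _ := by ring

end Sublevel

theorem four_div_two_pow_succ_rpow_le {p δ lam : ℝ} {K : ℕ} (d : ℕ) (hp : 0 ≤ p) (hδp : δ ≤ p)
    (hlam : 2 ≤ lam) (hK : lam / 2 < 2 ^ (K + 1)) :
    (4 / 2 ^ (K + 1)) ^ p ≤ 8 ^ p / Real.log 2 ^ d * lam ^ (-δ) * Real.log lam ^ d := by
  have hlam0 : 0 < lam := by linarith
  have hlog : 1 ≤ Real.log lam / Real.log 2 :=
    (one_le_div (by positivity)).mpr (Real.log_le_log two_pos hlam)
  calc (4 / 2 ^ (K + 1) : ℝ) ^ p ≤ (8 / lam) ^ p := by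
        refine Real.rpow_le_rpow (by positivity) ?_ hp
        rw [div_le_div_iff₀ (by positivity) hlam0]
        linarith
    _ = 8 ^ p * lam ^ (-p) := by
        rw [Real.div_rpow (by norm_num) hlam0.le, Real.rpow_neg hlam0.le, div_eq_mul_inv]
    _ ≤ 8 ^ p * lam ^ (-δ) := by
        gcongr
        linarith
    _ ≤ 8 ^ p * lam ^ (-δ) * (Real.log lam / Real.log 2) ^ d :=
        le_mul_of_one_le_right (by positivity) (one_le_pow₀ hlog)
    _ = 8 ^ p / Real.log 2 ^ d * lam ^ (-δ) * Real.log lam ^ d := by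
        rw [div_pow]
        ring

theorem stmt_6_general {X : Type*} [MeasurableSpace X] (μ : Measure X) [IsFiniteMeasure μ]
    (S : X → ℝ) (hS : Measurable S)
    (C₀ δ : ℝ) (d : ℕ) (hC₀ : 0 < C₀)
    (hsub : ∀ ε : ℝ, 0 < ε → ε < 1 / 2 →
      (μ {x | |S x| < ε}).toReal ≤ C₀ * ε ^ δ * Real.log (1 / ε) ^ d)
    (p : ℝ) (hp0 : 0 < p) (hδp : δ < p) :
    ∃ C > (0 : ℝ), ∀ lam : ℝ, 2 ≤ lam →
      (∫ x, (if S x = 0 then (1 : ℝ) else min 1 ((lam * |S x|) ^ (-p))) ∂μ) ≤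
        C * lam ^ (-δ) * Real.log lam ^ d := by
  have hθ : (0 : ℝ) < 1 - 2 ^ δ / 2 ^ p := sub_pos.mpr (two_rpow_div_two_rpow_lt_one hδp)
  refine ⟨4 ^ p * 2 ^ d * C₀ / (2 ^ δ * (1 - 2 ^ δ / 2 ^ p)) + 8 ^ p / Real.log 2 ^ d * μ.real univ,
    add_pos_of_pos_of_nonneg (div_pos (by positivity) (mul_pos (by positivity) hθ))
      (by positivity), fun lam hlam => ?_⟩
  have hlam0 : 0 < lam := by linarith
  obtain ⟨K, hK, hK'⟩ := exists_nat_pow_near (x := lam / 2) (by linarith) one_lt_two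
  have hint := integral_le_sum_measureReal_add μ (F := fun x => cappedDecay p lam (S x))
    (A := fun k => {x | |S x| < 2 ^ k / (2 * lam)}) (w := fun k => (4 / 2 ^ k : ℝ) ^ p)
    (fun _ => measurableSet_lt hS.abs measurable_const) (fun _ => cappedDecay_nonneg hlam0.le)
    (fun _ => by positivity)
    (fun _ => cappedDecay_le_one.trans (Real.one_le_rpow (by norm_num) hp0.le))
    (fun _ _ hx => (cappedDecay_le_of_le hp0.le hlam0 (by positivity) (not_lt.mp hx)).trans_eq
      (by congr 1; field_simp; ring)) K
  have hsum := sum_rpow_mul_measureReal_abs_lt_le hsub hC₀.le hδp hlam hK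
  have htail := mul_le_mul_of_nonneg_right (four_div_two_pow_succ_rpow_le d hp0.le hδp.le hlam hK')
    (measureReal_nonneg (μ := μ) (s := univ))
  change ∫ x, cappedDecay p lam (S x) ∂μ ≤ _
  linarith

/-- The measure-theoretic estimate of equations (3.24)–(3.31):
from the sublevel bound `μ{|S|<ε} ≤ C₀ ε^δ (ln(1/ε))^d` one gets a bound on
`∫ min(1, (λ|S|)^{-p}) dμ` (the minimum interpreted as 1 where `S = 0`). -/
theorem stmt_6 {X : Type*} [MeasurableSpace X] (μ : Measure X) [IsFiniteMeasure μ]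
    (S : X → ℝ) (hS : Measurable S)
    (C₀ δ : ℝ) (d : ℕ) (hC₀ : 0 < C₀) (hδ : 0 < δ) (hd : d ≤ 1)
    (hsub : ∀ ε : ℝ, 0 < ε → ε < 1 / 2 →
      (μ {x | |S x| < ε}).toReal ≤ C₀ * ε ^ δ * Real.log (1 / ε) ^ d)
    (p : ℝ) (hp0 : 0 < p) (hp1 : p ≤ 1) (hδp : δ < p) :
    ∃ C > (0 : ℝ), ∀ lam : ℝ, 2 ≤ lam →
      (∫ x, (if S x = 0 then (1 : ℝ) else min 1 ((lam * |S x|) ^ (-p))) ∂μ) ≤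
        C * lam ^ (-δ) * Real.log lam ^ d :=
  stmt_6_general μ S hS C₀ δ d hC₀ hsub p hp0 hδp
end

section
/- Let (X,μ) be a finite measure space, S : X → ℝ measurable, and suppose there are constants C₀ > 0, δ > 0 and d ∈ {0,1} such that μ({x : |S(x)| < ε}) ≤ C₀ ε^δ (ln(1/ε))^d for all 0 < ε < 1/2. Let p ∈ (0,1] and suppose δ > p. Then there is a constant C > 0, depending only on C₀, δ, d, p and μ(X), such that for all λ ≥ 2, ∫_X min(1, (λ|S(x)|)^{-p}) dμ(x) ≤ C λ^{-p}. -/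
/-!
Since `δ > p`, the logarithm is absorbed into a slightly smaller power: `μ{|S| < ε} ≤ K ε^σ`
with `σ > p`. By the layer-cake formula the distribution function of `|S|^(-p)` then decays like
`t^(-σ/p)`, which is integrable at infinity, so `|S|^(-p)` is integrable; moreover `S ≠ 0` a.e.
Pointwise `min 1 ((λ|S|)^(-p)) ≤ λ^(-p) |S|^(-p)` off `{S = 0}`, so `C = ∫ |S|^(-p) dμ + 1` works.
-/

open MeasureTheory Topology Filter Set

theorem mul_rpow_mul_log_pow_le {C₀ δ r ε : ℝ} (d : ℕ) (hC₀ : 0 ≤ C₀) (hr : 0 < r) (hε : 0 < ε)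
    (hε₁ : ε ≤ 1) :
    C₀ * ε ^ δ * Real.log (1 / ε) ^ d ≤ C₀ / r ^ d * ε ^ (δ - r * d) := by
  have hlog : Real.log (1 / ε) ≤ ε ^ (-r) / r := by
    simpa [Real.rpow_neg hε.le, Real.inv_rpow hε.le] using
      Real.log_le_rpow_div (x := 1 / ε) (by positivity) hr
  calc C₀ * ε ^ δ * Real.log (1 / ε) ^ d
      ≤ C₀ * ε ^ δ * (ε ^ (-r) / r) ^ d := by
        gcongr
        exact Real.log_nonneg (one_le_one_div hε hε₁)
    _ = C₀ / r ^ d * ε ^ (δ - r * d) := by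
        rw [div_pow, ← Real.rpow_mul_natCast hε.le, sub_eq_add_neg, Real.rpow_add hε, neg_mul]
        ring

theorem exists_le_rpow_of_le_mul_rpow_mul_log_pow {m : ℝ → ℝ} {C₀ δ p ε₀ : ℝ} (d : ℕ)
    (hC₀ : 0 ≤ C₀) (hpδ : p < δ) (hε₀ : ε₀ ≤ 1)
    (h : ∀ ε, 0 < ε → ε < ε₀ → m ε ≤ C₀ * ε ^ δ * Real.log (1 / ε) ^ d) :
    ∃ K σ, p < σ ∧ ∀ ε, 0 < ε → ε < ε₀ → m ε ≤ K * ε ^ σ := by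
  set r := (δ - p) / (d + 1)
  have hr : 0 < r := div_pos (by linarith) (by positivity)
  have hrd : r * d < δ - p := by
    rw [div_mul_eq_mul_div, div_lt_iff₀ (by positivity)]
    nlinarith
  exact ⟨C₀ / r ^ d, δ - r * d, by linarith, fun ε hε hεε₀ =>
    (h ε hε hεε₀).trans (mul_rpow_mul_log_pow_le d hC₀ hr hε (by linarith))⟩

theorem setOf_lt_abs_rpow_neg_subset {X : Type*} {f : X → ℝ} {p t : ℝ} (hp : 0 < p) (ht : 0 < t) :
    {x | t < |f x| ^ (-p)} ⊆ {x | |f x| < t ^ (-p)⁻¹} := by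
  have hp' : -p ≠ 0 := neg_ne_zero.2 hp.ne'
  intro x (hx : t < |f x| ^ (-p))
  have hfx : 0 < |f x| := by
    refine (abs_nonneg _).lt_of_ne fun h0 => ?_
    rw [← h0, Real.zero_rpow hp'] at hx
    exact ht.not_gt hx
  have := Real.rpow_lt_rpow_of_neg ht hx (inv_lt_zero.2 (neg_lt_zero.2 hp))
  rwa [Real.rpow_rpow_inv hfx.le hp'] at this

section Sublevel

variable {X : Type*} [MeasurableSpace X] {μ : Measure X} [IsFiniteMeasure μ] {f : X → ℝ}
  {K σ ε₀ : ℝ}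

theorem measure_eq_zero_of_measureReal_abs_lt_le (hσ : 0 < σ) (hε₀ : 0 < ε₀)
    (h : ∀ ε, 0 < ε → ε < ε₀ → μ.real {x | |f x| < ε} ≤ K * ε ^ σ) :
    μ {x | f x = 0} = 0 := by
  have hlim : Tendsto (fun ε : ℝ => K * ε ^ σ) (𝓝[>] 0) (𝓝 0) := by
    simpa [Real.zero_rpow hσ.ne'] using
      ((Real.continuousAt_rpow_const 0 σ (Or.inr hσ.le)).const_mul K).tendsto.mono_left
        nhdsWithin_le_nhds
  have hle : μ.real {x | f x = 0} ≤ 0 := by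
    refine ge_of_tendsto hlim ?_
    filter_upwards [Ioo_mem_nhdsGT hε₀] with ε ⟨hε, hεε₀⟩
    refine (measureReal_mono fun x (hx : f x = 0) => ?_).trans (h ε hε hεε₀)
    simpa [hx] using hε
  exact (measureReal_eq_zero_iff).1 (le_antisymm hle measureReal_nonneg)

theorem lintegral_abs_rpow_neg_lt_top_of_measureReal_abs_lt_le (hf : Measurable f) {p : ℝ}
    (hp : 0 < p) (hpσ : p < σ) (hε₀ : 0 < ε₀)
    (h : ∀ ε, 0 < ε → ε < ε₀ → μ.real {x | |f x| < ε} ≤ K * ε ^ σ) :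
    ∫⁻ x, ENNReal.ofReal (|f x| ^ (-p)) ∂μ < ⊤ := by
  have hp' : -p ≠ 0 := neg_ne_zero.2 hp.ne'
  have hq : (-p)⁻¹ < 0 := inv_lt_zero.2 (neg_lt_zero.2 hp)
  set c := ε₀ ^ (-p)
  have hc : 0 < c := Real.rpow_pos_of_pos hε₀ _
  have htail : ∀ t ∈ Ioi c,
      μ {x | t < |f x| ^ (-p)} ≤ ENNReal.ofReal (K * t ^ ((-p)⁻¹ * σ)) := by
    intro t (hct : c < t)
    have ht := hc.trans hct
    have hε : t ^ (-p)⁻¹ < ε₀ := by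
      have := Real.rpow_lt_rpow_of_neg hc hct hq
      rwa [Real.rpow_rpow_inv hε₀.le hp'] at this
    calc μ {x | t < |f x| ^ (-p)} ≤ μ {x | |f x| < t ^ (-p)⁻¹} :=
          measure_mono (setOf_lt_abs_rpow_neg_subset hp ht)
      _ = ENNReal.ofReal (μ.real {x | |f x| < t ^ (-p)⁻¹}) := (ofReal_measureReal).symm
      _ ≤ ENNReal.ofReal (K * t ^ ((-p)⁻¹ * σ)) := by
        rw [Real.rpow_mul ht.le]
        exact ENNReal.ofReal_le_ofReal (h _ (Real.rpow_pos_of_pos ht _) hε)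
  have hexp : (-p)⁻¹ * σ < -1 := by
    have : 1 < σ / p := (one_lt_div hp).2 hpσ
    rw [inv_neg, neg_mul, inv_mul_eq_div]
    linarith
  rw [lintegral_eq_lintegral_meas_lt μ (ae_of_all _ fun x => by positivity)
    (hf.abs.pow_const _).aemeasurable, ← Ioc_union_Ioi_eq_Ioi hc.le]
  refine (lintegral_union_le _ _ _).trans_lt (ENNReal.add_lt_top.2 ⟨?_, ?_⟩)
  · calc ∫⁻ t in Ioc 0 c, μ {x | t < |f x| ^ (-p)}
        ≤ ∫⁻ _ in Ioc 0 c, μ univ := lintegral_mono fun t => measure_mono (subset_univ _)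
      _ < ⊤ := by simp [ENNReal.mul_lt_top, measure_lt_top]
  · calc ∫⁻ t in Ioi c, μ {x | t < |f x| ^ (-p)}
        ≤ ∫⁻ t in Ioi c, ENNReal.ofReal (K * t ^ ((-p)⁻¹ * σ)) :=
          setLIntegral_mono' measurableSet_Ioi htail
      _ < ⊤ := ((integrableOn_Ioi_rpow_of_lt hexp hc).const_mul K).lintegral_lt_top

theorem integrable_abs_rpow_neg_of_measureReal_abs_lt_le (hf : Measurable f) {p : ℝ}
    (hp : 0 < p) (hpσ : p < σ) (hε₀ : 0 < ε₀)
    (h : ∀ ε, 0 < ε → ε < ε₀ → μ.real {x | |f x| < ε} ≤ K * ε ^ σ) :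
    Integrable (fun x => |f x| ^ (-p)) μ :=
  ⟨(hf.abs.pow_const _).aestronglyMeasurable,
    (hasFiniteIntegral_iff_ofReal (ae_of_all _ fun x => by positivity)).2
      (lintegral_abs_rpow_neg_lt_top_of_measureReal_abs_lt_le hf hp hpσ hε₀ h)⟩

end Sublevel

theorem stmt_7_general {X : Type*} [MeasurableSpace X] (μ : Measure X) [IsFiniteMeasure μ]
    (S : X → ℝ) (hS : Measurable S)
    (C₀ δ : ℝ) (d : ℕ) (hC₀ : 0 < C₀)
    (hsub : ∀ ε : ℝ, 0 < ε → ε < 1 / 2 →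
      (μ {x | |S x| < ε}).toReal ≤ C₀ * ε ^ δ * Real.log (1 / ε) ^ d)
    (p : ℝ) (hp0 : 0 < p) (hδp : δ > p) :
    ∃ C > (0 : ℝ), ∀ lam : ℝ, 2 ≤ lam →
      (∫ x, (if S x = 0 then (1 : ℝ) else min 1 ((lam * |S x|) ^ (-p))) ∂μ) ≤
        C * lam ^ (-p) := by
  obtain ⟨K, σ, hpσ, hpow⟩ :=
    exists_le_rpow_of_le_mul_rpow_mul_log_pow d hC₀.le hδp (by norm_num) hsub
  have hint := integrable_abs_rpow_neg_of_measureReal_abs_lt_le hS hp0 hpσ one_half_pos hpow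
  have hS0 := measure_eq_zero_of_measureReal_abs_lt_le (hp0.trans hpσ) one_half_pos hpow
  have hI : 0 ≤ ∫ x, |S x| ^ (-p) ∂μ := integral_nonneg fun x => by positivity
  refine ⟨∫ x, |S x| ^ (-p) ∂μ + 1, by positivity, fun lam hlam => ?_⟩
  have hlamp : 0 ≤ lam ^ (-p) := by positivity
  have hbound : ∀ᵐ x ∂μ, (if S x = 0 then (1 : ℝ) else min 1 ((lam * |S x|) ^ (-p))) ≤
      lam ^ (-p) * |S x| ^ (-p) := by
    filter_upwards [measure_eq_zero_iff_ae_notMem.1 hS0] with x (hx : S x ≠ 0)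
    rw [if_neg hx, ← Real.mul_rpow (by linarith) (abs_nonneg _)]
    exact min_le_right _ _
  calc (∫ x, (if S x = 0 then (1 : ℝ) else min 1 ((lam * |S x|) ^ (-p))) ∂μ)
      ≤ ∫ x, lam ^ (-p) * |S x| ^ (-p) ∂μ :=
        integral_mono_of_nonneg
          (ae_of_all _ fun x => by dsimp only [Pi.zero_apply]; split_ifs <;> positivity)
          (hint.const_mul _) hbound
    _ = lam ^ (-p) * ∫ x, |S x| ^ (-p) ∂μ := integral_const_mul _ _
    _ ≤ (∫ x, |S x| ^ (-p) ∂μ + 1) * lam ^ (-p) := by nlinarith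

/-- The measure-theoretic estimate of equations (3.24)–(3.31):
from the sublevel bound `μ{|S|<ε} ≤ C₀ ε^δ (ln(1/ε))^d` one gets a bound on
`∫ min(1, (λ|S|)^{-p}) dμ` (the minimum interpreted as 1 where `S = 0`). -/
theorem stmt_7 {X : Type*} [MeasurableSpace X] (μ : Measure X) [IsFiniteMeasure μ]
    (S : X → ℝ) (hS : Measurable S)
    (C₀ δ : ℝ) (d : ℕ) (hC₀ : 0 < C₀) (hδ : 0 < δ) (hd : d ≤ 1)
    (hsub : ∀ ε : ℝ, 0 < ε → ε < 1 / 2 →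
      (μ {x | |S x| < ε}).toReal ≤ C₀ * ε ^ δ * Real.log (1 / ε) ^ d)
    (p : ℝ) (hp0 : 0 < p) (hp1 : p ≤ 1) (hδp : δ > p) :
    ∃ C > (0 : ℝ), ∀ lam : ℝ, 2 ≤ lam →
      (∫ x, (if S x = 0 then (1 : ℝ) else min 1 ((lam * |S x|) ^ (-p))) ∂μ) ≤
        C * lam ^ (-p) :=
  stmt_7_general μ S hS C₀ δ d hC₀ hsub p hp0 hδp
end

section
/- Let (X,μ) be a finite measure space, S : X → ℝ measurable, and suppose there are constants C₀ > 0, δ > 0 and d ∈ {0,1} such that μ({x : |S(x)| < ε}) ≤ C₀ ε^δ (ln(1/ε))^d for all 0 < ε < 1/2. Let p ∈ (0,1] and suppose δ = p. Then there is a constant C > 0, depending only on C₀, δ, d, p and μ(X), such that for all λ ≥ 2, ∫_X min(1, (λ|S(x)|)^{-p}) dμ(x) ≤ C λ^{-p} (ln λ)^{d+1}. -/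
/-!
Write `w(s) = min(1, (λ|s|)^{-p})`, so `0 ≤ w ≤ 1`. By the layer-cake formula
`∫ w ∘ S = ∫₀¹ μ{t < w ∘ S} dt`. Below `a = (2/λ)^p ≈ λ^{-p}` the integrand is at most `μ(X)`.
For `t ∈ (a, 1]` one has `{t < w ∘ S} ⊆ {|S| < ε}` with `ε = (λ t^{1/p})⁻¹ < 1/2`, and since
`δ = p` the sublevel bound gives `μ{|S| < ε} ≤ C₀ λ^{-p} (ln λ)^d / t`; integrating `1/t` over
`(a, 1]` produces the extra factor `ln(1/a) ≤ ln λ`.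
-/

open MeasureTheory Set Real

noncomputable def truncatedPowerWeight (lam p s : ℝ) : ℝ :=
  if s = 0 then 1 else min 1 ((lam * |s|) ^ (-p))

theorem truncatedPowerWeight_nonneg {lam : ℝ} (hlam : 0 ≤ lam) (p s : ℝ) :
    0 ≤ truncatedPowerWeight lam p s := by
  unfold truncatedPowerWeight
  split_ifs
  · exact zero_le_one
  · exact le_min zero_le_one (by positivity)

theorem truncatedPowerWeight_le_one (lam p s : ℝ) : truncatedPowerWeight lam p s ≤ 1 := by
  unfold truncatedPowerWeight
  split_ifs
  · exact le_rfl
  · exact min_le_left _ _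

theorem measurable_truncatedPowerWeight (lam p : ℝ) :
    Measurable (truncatedPowerWeight lam p) :=
  Measurable.ite (measurableSet_singleton 0) measurable_const
    (measurable_const.min (by fun_prop))

theorem abs_lt_of_lt_truncatedPowerWeight {lam p s t : ℝ} (hlam : 0 < lam) (hp : 0 < p)
    (ht : 0 < t) (h : t < truncatedPowerWeight lam p s) : |s| < (lam * t ^ p⁻¹)⁻¹ := by
  unfold truncatedPowerWeight at h
  split_ifs at h with hs
  · rw [hs, abs_zero]
    positivity
  have hy : 0 < lam * |s| := by positivity
  have h1 : t * (lam * |s|) ^ p < 1 := by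
    rw [← lt_div_iff₀ (by positivity), one_div, ← rpow_neg hy.le]
    exact h.trans_le (min_le_right _ _)
  have h2 : (t ^ p⁻¹ * (lam * |s|)) ^ p < 1 := by
    rwa [mul_rpow (by positivity) hy.le, rpow_inv_rpow ht.le hp.ne']
  have h3 : t ^ p⁻¹ * (lam * |s|) < 1 := by
    simpa [hp.not_gt, hp] using (rpow_lt_one_iff_of_pos (by positivity)).1 h2
  rw [← one_div, lt_div_iff₀ (by positivity)]
  calc |s| * (lam * t ^ p⁻¹) = t ^ p⁻¹ * (lam * |s|) := by ring
    _ < 1 := h3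

theorem setIntegral_Ioc_div_eq_mul_log_inv (B : ℝ) {a : ℝ} (ha0 : 0 < a) (ha1 : a ≤ 1) :
    ∫ t in Ioc a 1, B / t = B * log a⁻¹ := by
  simp_rw [div_eq_mul_inv]
  rw [← intervalIntegral.integral_of_le ha1, intervalIntegral.integral_const_mul, integral_inv,
    one_div]
  rw [uIcc_of_le ha1]
  exact fun h0 => ha0.not_ge h0.1

theorem integral_le_of_measureReal_lt_le {X : Type*} [MeasurableSpace X] {μ : Measure X}
    [IsFiniteMeasure μ] {f : X → ℝ} (hf : Measurable f) (hf0 : ∀ x, 0 ≤ f x)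
    (hf1 : ∀ x, f x ≤ 1) {a B : ℝ} (ha0 : 0 < a) (ha1 : a ≤ 1) (hB : 0 ≤ B)
    (h : ∀ t ∈ Ioc a 1, μ.real {x | t < f x} ≤ B / t) :
    ∫ x, f x ∂μ ≤ μ.real univ * a + B * log a⁻¹ := by
  have hsmall : ∫⁻ t in Ioc 0 a, μ {x | t < f x} ≤ μ univ * ENNReal.ofReal a := by
    calc ∫⁻ t in Ioc 0 a, μ {x | t < f x} ≤ ∫⁻ _ in Ioc 0 a, μ univ :=
          lintegral_mono fun t => measure_mono (subset_univ _)
      _ = μ univ * ENNReal.ofReal a := by rw [setLIntegral_const, volume_Ioc, sub_zero]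
  have hmiddle : ∫⁻ t in Ioc a 1, μ {x | t < f x} ≤ ENNReal.ofReal (B * log a⁻¹) := by
    calc ∫⁻ t in Ioc a 1, μ {x | t < f x} ≤ ∫⁻ t in Ioc a 1, ENNReal.ofReal (B / t) := by
          refine setLIntegral_mono (by fun_prop) fun t ht => ?_
          rw [← ofReal_measureReal]
          exact ENNReal.ofReal_le_ofReal (h t ht)
      _ = ENNReal.ofReal (B * log a⁻¹) := by
          rw [← setIntegral_Ioc_div_eq_mul_log_inv B ha0 ha1, ofReal_integral_eq_lintegral_ofReal]
          · exact (continuousOn_const.div continuousOn_id fun t ht =>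
              (ha0.trans_le ht.1).ne').integrableOn_Icc.mono_set Ioc_subset_Icc_self
          · exact (ae_restrict_iff' measurableSet_Ioc).2
              (ae_of_all _ fun t ht => div_nonneg hB (ha0.trans ht.1).le)
  have hlarge : ∫⁻ t in Ioi 1, μ {x | t < f x} = 0 := by
    refine setLIntegral_eq_zero measurableSet_Ioi fun t ht => ?_
    have : {x | t < f x} = ∅ :=
      eq_empty_of_forall_notMem fun x hx => (hf1 x).not_gt ((mem_Ioi.1 ht).trans hx)
    rw [this, measure_empty, Pi.zero_apply]
  have hlintegral : ∫⁻ x, ENNReal.ofReal (f x) ∂μ ≤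
      μ univ * ENNReal.ofReal a + ENNReal.ofReal (B * log a⁻¹) := by
    rw [lintegral_eq_lintegral_meas_lt μ (ae_of_all _ hf0) hf.aemeasurable,
      ← Ioc_union_Ioi_eq_Ioi ha0.le, lintegral_union measurableSet_Ioi
        (Ioc_disjoint_Ioi le_rfl), ← Ioc_union_Ioi_eq_Ioi ha1,
      lintegral_union measurableSet_Ioi (Ioc_disjoint_Ioi le_rfl), hlarge, add_zero]
    exact add_le_add hsmall hmiddle
  have hloga : 0 ≤ log a⁻¹ := log_nonneg (one_le_inv₀ ha0 |>.2 ha1)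
  rw [integral_eq_lintegral_of_nonneg_ae (ae_of_all _ hf0) hf.aestronglyMeasurable]
  refine (ENNReal.toReal_mono (by finiteness) hlintegral).trans_eq ?_
  rw [ENNReal.toReal_add (by finiteness) (by finiteness), ENNReal.toReal_mul,
    ENNReal.toReal_ofReal ha0.le, ENNReal.toReal_ofReal (mul_nonneg hB hloga), measureReal_def]

theorem measureReal_lt_truncatedPowerWeight_le {X : Type*} [MeasurableSpace X] {μ : Measure X}
    [IsFiniteMeasure μ] {S : X → ℝ} {C₀ p : ℝ} {d : ℕ} (hC₀ : 0 ≤ C₀) (hp : 0 < p)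
    (hsub : ∀ ε : ℝ, 0 < ε → ε < 1 / 2 →
      μ.real {x | |S x| < ε} ≤ C₀ * ε ^ p * log (1 / ε) ^ d)
    {lam t : ℝ} (hlam : 0 < lam) (ht : t ∈ Ioc ((2 / lam) ^ p) 1) :
    μ.real {x | t < truncatedPowerWeight lam p (S x)} ≤ C₀ * lam ^ (-p) * log lam ^ d / t := by
  obtain ⟨hta, ht1⟩ := ht
  have ht0 : 0 < t := (by positivity : 0 < (2 / lam) ^ p).trans hta
  set u := lam * t ^ p⁻¹ with hu
  have hu2 : 2 < u := by
    have h := rpow_lt_rpow (by positivity) hta (inv_pos.2 hp)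
    rw [rpow_rpow_inv (by positivity) hp.ne', div_lt_iff₀ hlam] at h
    linarith
  have hulam : u ≤ lam :=
    mul_le_of_le_one_right hlam.le (rpow_le_one ht0.le ht1 (inv_pos.2 hp).le)
  have hup : u ^ p = lam ^ p * t := by
    rw [hu, mul_rpow hlam.le (by positivity), rpow_inv_rpow ht0.le hp.ne']
  calc μ.real {x | t < truncatedPowerWeight lam p (S x)} ≤ μ.real {x | |S x| < u⁻¹} :=
        measureReal_mono fun x hx => abs_lt_of_lt_truncatedPowerWeight hlam hp ht0 hx
    _ ≤ C₀ * u⁻¹ ^ p * log (1 / u⁻¹) ^ d :=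
        hsub _ (by positivity) (by rw [one_div]; exact inv_strictAnti₀ two_pos hu2)
    _ = C₀ * (lam ^ p * t)⁻¹ * log u ^ d := by
        rw [inv_rpow (by positivity), hup, one_div, inv_inv]
    _ ≤ C₀ * (lam ^ p * t)⁻¹ * log lam ^ d := by
        gcongr
        exact log_nonneg (by linarith)
    _ = C₀ * lam ^ (-p) * log lam ^ d / t := by
        rw [rpow_neg hlam.le]
        ring

theorem rpow_two_div_le {p lam : ℝ} (hp1 : p ≤ 1) (hlam : 0 < lam) :
    (2 / lam) ^ p ≤ 2 * lam ^ (-p) := by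
  rw [div_rpow zero_le_two hlam.le, rpow_neg hlam.le, div_eq_mul_inv]
  gcongr
  calc (2 : ℝ) ^ p ≤ 2 ^ (1 : ℝ) := rpow_le_rpow_of_exponent_le one_le_two hp1
    _ = 2 := rpow_one 2

theorem log_inv_rpow_two_div_le {p lam : ℝ} (hp1 : p ≤ 1) (hlam : 2 ≤ lam) :
    log ((2 / lam) ^ p)⁻¹ ≤ log lam := by
  rw [← inv_rpow (by positivity), inv_div, log_rpow (by positivity)]
  calc p * log (lam / 2) ≤ 1 * log lam :=
        mul_le_mul hp1 (log_le_log (by positivity) (by linarith))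
          (log_nonneg ((one_le_div two_pos).2 hlam)) zero_le_one
    _ = log lam := one_mul _

theorem stmt_8_general {X : Type*} [MeasurableSpace X] (μ : Measure X) [IsFiniteMeasure μ]
    (S : X → ℝ) (hS : Measurable S)
    (C₀ δ : ℝ) (d : ℕ) (hC₀ : 0 < C₀)
    (hsub : ∀ ε : ℝ, 0 < ε → ε < 1 / 2 →
      (μ {x | |S x| < ε}).toReal ≤ C₀ * ε ^ δ * Real.log (1 / ε) ^ d)
    (p : ℝ) (hp0 : 0 < p) (hp1 : p ≤ 1) (hδp : δ = p) :
    ∃ C > (0 : ℝ), ∀ lam : ℝ, 2 ≤ lam →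
      (∫ x, (if S x = 0 then (1 : ℝ) else min 1 ((lam * |S x|) ^ (-p))) ∂μ) ≤
        C * lam ^ (-p) * Real.log lam ^ (d + 1) := by
  subst δ
  refine ⟨2 * μ.real univ / log 2 ^ (d + 1) + C₀, by positivity, fun lam hlam => ?_⟩
  have hlam0 : 0 < lam := by linarith
  have hlog : 0 ≤ log lam := log_nonneg (by linarith)
  have hB : 0 ≤ C₀ * lam ^ (-p) * log lam ^ d := mul_nonneg (by positivity) (pow_nonneg hlog d)
  have hlayer := integral_le_of_measureReal_lt_le ((measurable_truncatedPowerWeight lam p).comp hS)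
    (fun x => truncatedPowerWeight_nonneg hlam0.le p (S x))
    (fun x => truncatedPowerWeight_le_one lam p (S x)) (by positivity)
    (rpow_le_one (by positivity) ((div_le_one hlam0).2 hlam) hp0.le) hB
    fun t ht => measureReal_lt_truncatedPowerWeight_le hC₀.le hp0 hsub hlam0 ht
  calc ∫ x, truncatedPowerWeight lam p (S x) ∂μ
      ≤ μ.real univ * (2 / lam) ^ p + C₀ * lam ^ (-p) * log lam ^ d * log ((2 / lam) ^ p)⁻¹ :=
        hlayer
    _ ≤ μ.real univ * (2 * lam ^ (-p)) + C₀ * lam ^ (-p) * log lam ^ d * log lam := by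
        gcongr _ * ?_ + _ * ?_
        · exact rpow_two_div_le hp1 hlam0
        · exact log_inv_rpow_two_div_le hp1 hlam
    _ = 2 * μ.real univ / log 2 ^ (d + 1) * lam ^ (-p) * log 2 ^ (d + 1) +
          C₀ * lam ^ (-p) * log lam ^ (d + 1) := by
        field_simp
        ring
    _ ≤ (2 * μ.real univ / log 2 ^ (d + 1) + C₀) * lam ^ (-p) * log lam ^ (d + 1) := by
        rw [add_mul, add_mul]
        gcongr

/-- The measure-theoretic estimate of equations (3.24)–(3.31):
from the sublevel bound `μ{|S|<ε} ≤ C₀ ε^δ (ln(1/ε))^d` one gets a bound on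
`∫ min(1, (λ|S|)^{-p}) dμ` (the minimum interpreted as 1 where `S = 0`). -/
theorem stmt_8 {X : Type*} [MeasurableSpace X] (μ : Measure X) [IsFiniteMeasure μ]
    (S : X → ℝ) (hS : Measurable S)
    (C₀ δ : ℝ) (d : ℕ) (hC₀ : 0 < C₀) (hδ : 0 < δ) (hd : d ≤ 1)
    (hsub : ∀ ε : ℝ, 0 < ε → ε < 1 / 2 →
      (μ {x | |S x| < ε}).toReal ≤ C₀ * ε ^ δ * Real.log (1 / ε) ^ d)
    (p : ℝ) (hp0 : 0 < p) (hp1 : p ≤ 1) (hδp : δ = p) :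
    ∃ C > (0 : ℝ), ∀ lam : ℝ, 2 ≤ lam →
      (∫ x, (if S x = 0 then (1 : ℝ) else min 1 ((lam * |S x|) ^ (-p))) ∂μ) ≤
        C * lam ^ (-p) * Real.log lam ^ (d + 1) :=
  stmt_8_general μ S hS C₀ δ d hC₀ hsub p hp0 hp1 hδp
end

section
/- Let a, b, a', b' be nonnegative real numbers and let 0 < M ≤ m be real numbers. Suppose a' + M b' ≥ a + M b and a' + m b' ≥ a + m b. Then for all real x, y with 0 < x < 1 and x^m ≤ y ≤ x^M, one has x^{a'} y^{b'} ≤ x^{a} y^{b}. -/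
/-!
Taking logarithms, with `u = log x ≤ 0` and `v = log y ∈ [m u, M u]`, the claim becomes the linear
inequality `a' u + b' v ≤ a u + b v`. If `b ≤ b'`, bound `(b' - b) v` by `(b' - b) M u`, which leaves
`(a' + M b' - a - M b) u ≤ 0`; if `b' ≤ b`, use `v ≥ m u` and the supporting line of slope `m`.
-/

open Real

theorem linear_le_of_le_of_supporting_lines {a b a' b' M m u v : ℝ} (hu : u ≤ 0)
    (hmv : m * u ≤ v) (hvM : v ≤ M * u)
    (h1 : a + M * b ≤ a' + M * b') (h2 : a + m * b ≤ a' + m * b') :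
    a' * u + b' * v ≤ a * u + b * v := by
  rcases le_total b b' with hbb | hbb
  · nlinarith [mul_le_mul_of_nonneg_left hvM (sub_nonneg.2 hbb)]
  · nlinarith [mul_le_mul_of_nonneg_left hmv (sub_nonneg.2 hbb)]

theorem rpow_mul_rpow_le_of_le_of_supporting_lines {a b a' b' M m x y : ℝ} (hx : 0 < x)
    (hx1 : x ≤ 1) (hmy : x ^ m ≤ y) (hyM : y ≤ x ^ M)
    (h1 : a + M * b ≤ a' + M * b') (h2 : a + m * b ≤ a' + m * b') :
    x ^ a' * y ^ b' ≤ x ^ a * y ^ b := by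
  have hy : 0 < y := (rpow_pos_of_pos hx m).trans_le hmy
  have hmv : m * log x ≤ log y := by
    rw [← log_rpow hx]
    exact log_le_log (rpow_pos_of_pos hx m) hmy
  have hvM : log y ≤ M * log x := by
    rw [← log_rpow hx]
    exact log_le_log hy hyM
  simp only [rpow_def_of_pos hx, rpow_def_of_pos hy, ← exp_add, exp_le_exp, mul_comm (log _)]
  exact linear_le_of_le_of_supporting_lines (log_nonpos hx.le hx1) hmv hvM h1 h2

theorem stmt_9_general (a b a' b' M m : ℝ)
    (h1 : a + M * b ≤ a' + M * b') (h2 : a + m * b ≤ a' + m * b') :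
    ∀ x y : ℝ, 0 < x → x < 1 → x ^ m ≤ y → y ≤ x ^ M →
      x ^ a' * y ^ b' ≤ x ^ a * y ^ b :=
  fun _ _ hx hx1 hmy hyM =>
    rpow_mul_rpow_le_of_le_of_supporting_lines hx hx1.le hmy hyM h1 h2

/-- The monomial comparison underlying Lemma 5.1: if the exponent pair `(a',b')`
lies on or above the supporting lines of `(a,b)` at slopes `M` and `m`, then
`x^{a'} y^{b'} ≤ x^a y^b` for `0 < x < 1` and `x^m ≤ y ≤ x^M`. -/
theorem stmt_9 (a b a' b' M m : ℝ)
    (ha : 0 ≤ a) (hb : 0 ≤ b) (ha' : 0 ≤ a') (hb' : 0 ≤ b')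
    (hM : 0 < M) (hMm : M ≤ m)
    (h1 : a + M * b ≤ a' + M * b') (h2 : a + m * b ≤ a' + m * b') :
    ∀ x y : ℝ, 0 < x → x < 1 → x ^ m ≤ y → y ≤ x ^ M →
      x ^ a' * y ^ b' ≤ x ^ a * y ^ b :=
  stmt_9_general a b a' b' M m h1 h2
end

section
/- Let f(x,y) = Σ_{(j,k) ∈ ℕ×ℕ} c_{jk} x^j y^k be a power series with real coefficients, not identically zero, converging absolutely for |x|, |y| ≤ ρ for some ρ > 0. Let M > 0 be a real number and let A = min{ j + M k : c_{jk} ≠ 0 }. Then for every real y, lim_{x → 0⁺} f(x, x^M y) / x^A = Σ_{{(j,k) : j + M k = A}} c_{jk} y^k. -/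
/-! For `x > 0` the `(j, k)` term of `f(x, x^M y) / x^A` is `c_{jk} y^k x^(j + Mk - A)`, and the
exponent is nonnegative wherever `c_{jk} ≠ 0` by the choice of `A`. On `0 < x < ε`, with `ε ≤ ρ`
and `ε^M |y| ≤ ρ`, these terms are dominated by `|c_{jk}| ρ^j ρ^k / ε^A`, so Tannery's theorem
lets the limit pass through the sum; terms with positive exponent tend to `0`, those with
exponent `0` are constant. -/

open Filter Topology Set

lemma tendsto_rpow_nhdsGT_zero {e : ℝ} (he : 0 < e) :
    Tendsto (fun x : ℝ => x ^ e) (𝓝[>] 0) (𝓝 0) := by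
  have h := (Real.continuousAt_rpow_const 0 e (Or.inr he.le)).tendsto
  rw [Real.zero_rpow he.ne'] at h
  exact h.mono_left nhdsWithin_le_nhds

lemma tendsto_mul_rpow_nhdsGT_zero {a e : ℝ} (he : a ≠ 0 → 0 ≤ e) :
    Tendsto (fun x : ℝ => a * x ^ e) (𝓝[>] 0) (𝓝 (if e = 0 then a else 0)) := by
  by_cases ha : a = 0
  · simp [ha]
  rcases (he ha).eq_or_lt with rfl | hpos
  · simp
  · simpa [hpos.ne'] using (tendsto_rpow_nhdsGT_zero hpos).const_mul a

theorem tendsto_tsum_mul_rpow_nhdsGT_zero {ι : Type*} (a e : ι → ℝ)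
    (he : ∀ i, a i ≠ 0 → 0 ≤ e i) {ε : ℝ} (hε : 0 < ε)
    (hs : Summable fun i => |a i| * ε ^ e i) :
    Tendsto (fun x : ℝ => ∑' i, a i * x ^ e i) (𝓝[>] 0)
      (𝓝 (∑' i, if e i = 0 then a i else 0)) := by
  refine tendsto_tsum_of_dominated_convergence hs
    (fun i => tendsto_mul_rpow_nhdsGT_zero (he i)) ?_
  filter_upwards [Ioo_mem_nhdsGT hε] with x hx i
  rw [norm_mul, Real.norm_eq_abs, Real.norm_eq_abs, abs_of_pos (Real.rpow_pos_of_pos hx.1 _)]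
  by_cases ha : a i = 0
  · simp [ha]
  · exact mul_le_mul_of_nonneg_left (Real.rpow_le_rpow hx.1.le hx.2.le (he i ha)) (abs_nonneg _)

lemma rpow_natCast_add_mul_sub {x : ℝ} (hx : 0 < x) (j k : ℕ) (M A : ℝ) :
    x ^ ((j : ℝ) + M * k - A) = x ^ j * (x ^ M) ^ k / x ^ A := by
  rw [Real.rpow_sub hx, Real.rpow_add hx, Real.rpow_mul hx.le, Real.rpow_natCast,
    Real.rpow_natCast]

lemma csInf_weightedDegree_le {c : ℕ × ℕ → ℝ} {M : ℝ} (hM : 0 ≤ M) {jk : ℕ × ℕ} (h : c jk ≠ 0) :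
    sInf {a : ℝ | ∃ jk : ℕ × ℕ, c jk ≠ 0 ∧ a = (jk.1 : ℝ) + M * (jk.2 : ℝ)}
      ≤ (jk.1 : ℝ) + M * (jk.2 : ℝ) :=
  csInf_le ⟨0, by rintro a ⟨jk, -, rfl⟩; positivity⟩ ⟨jk, h, rfl⟩

lemma exists_pos_le_and_rpow_mul_le {ρ M : ℝ} (hρ : 0 < ρ) (hM : 0 < M) (b : ℝ) :
    ∃ ε, 0 < ε ∧ ε ≤ ρ ∧ ε ^ M * b ≤ ρ := by
  have hsmall : ∀ᶠ x in 𝓝[>] (0 : ℝ), x ^ M * b < ρ := by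
    have := (tendsto_rpow_nhdsGT_zero hM).mul_const b
    rw [zero_mul] at this
    exact this.eventually (gt_mem_nhds hρ)
  obtain ⟨ε, hε, hsmall⟩ := (Eventually.and (Ioo_mem_nhdsGT hρ) hsmall).exists
  exact ⟨ε, hε.1, hε.2.le, hsmall.le⟩

theorem stmt_10_general (c : ℕ × ℕ → ℝ)
    (ρ : ℝ) (hρ : 0 < ρ)
    (hsum : Summable (fun jk : ℕ × ℕ => |c jk| * ρ ^ jk.1 * ρ ^ jk.2))
    (M : ℝ) (hM : 0 < M)
    (A : ℝ) (hA : A = sInf {a : ℝ | ∃ jk : ℕ × ℕ, c jk ≠ 0 ∧ a = (jk.1 : ℝ) + M * (jk.2 : ℝ)}) :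
    ∀ y : ℝ,
      Tendsto (fun x : ℝ => (∑' jk : ℕ × ℕ, c jk * x ^ jk.1 * (x ^ M * y) ^ jk.2) / x ^ A)
        (𝓝[>] 0)
        (𝓝 (∑' jk : ℕ × ℕ,
          if (jk.1 : ℝ) + M * (jk.2 : ℝ) = A then c jk * y ^ jk.2 else 0)) := by
  intro y
  obtain ⟨ε, hε, hερ, hεy⟩ := exists_pos_le_and_rpow_mul_le hρ hM |y|
  have hdom : Summable fun jk : ℕ × ℕ =>
      |c jk * y ^ jk.2| * ε ^ ((jk.1 : ℝ) + M * jk.2 - A) := by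
    refine (hsum.div_const (ε ^ A)).of_nonneg_of_le (fun _ => by positivity) fun jk => ?_
    rw [rpow_natCast_add_mul_sub hε, abs_mul, abs_pow]
    calc |c jk| * |y| ^ jk.2 * (ε ^ jk.1 * (ε ^ M) ^ jk.2 / ε ^ A)
        = |c jk| * ε ^ jk.1 * (ε ^ M * |y|) ^ jk.2 / ε ^ A := by ring
      _ ≤ |c jk| * ρ ^ jk.1 * ρ ^ jk.2 / ε ^ A := by gcongr
  have hlim := tendsto_tsum_mul_rpow_nhdsGT_zero _ _ (fun jk h => sub_nonneg.2
    (hA ▸ csInf_weightedDegree_le hM.le (left_ne_zero_of_mul h))) hε hdom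
  simp only [sub_eq_zero] at hlim
  refine hlim.congr' ?_
  filter_upwards [self_mem_nhdsWithin] with x (hx : 0 < x)
  rw [← tsum_div_const]
  refine tsum_congr fun jk => ?_
  rw [rpow_natCast_add_mul_sub hx, mul_pow]
  ring

/-- The limit (5.5): after the scaling `y ↦ x^M y`, the normalized series
`f(x, x^M y)/x^A` tends, as `x → 0⁺`, to the weighted-homogeneous polynomial
consisting of the terms with `j + Mk = A` minimal. -/
theorem stmt_10 (c : ℕ × ℕ → ℝ) (hc : ∃ jk, c jk ≠ 0)
    (ρ : ℝ) (hρ : 0 < ρ)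
    (hsum : Summable (fun jk : ℕ × ℕ => |c jk| * ρ ^ jk.1 * ρ ^ jk.2))
    (M : ℝ) (hM : 0 < M)
    (A : ℝ) (hA : A = sInf {a : ℝ | ∃ jk : ℕ × ℕ, c jk ≠ 0 ∧ a = (jk.1 : ℝ) + M * (jk.2 : ℝ)}) :
    ∀ y : ℝ,
      Tendsto (fun x : ℝ => (∑' jk : ℕ × ℕ, c jk * x ^ jk.1 * (x ^ M * y) ^ jk.2) / x ^ A)
        (𝓝[>] 0)
        (𝓝 (∑' jk : ℕ × ℕ,
          if (jk.1 : ℝ) + M * (jk.2 : ℝ) = A then c jk * y ^ jk.2 else 0)) :=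
  stmt_10_general c ρ hρ hsum M hM A hA
end

section
/- Let (X,μ) be a finite measure space and S : X → ℝ measurable. Suppose there are constants D > 0, δ₀ > 0 and d₀ ∈ {0,1} such that μ({x : |S(x)| < t}) = D t^{δ₀} (ln(1/t))^{d₀} + o(t^{δ₀} (ln(1/t))^{d₀}) as t → 0⁺, and let α > -δ₀ be a real number. Then ∫_{{x : |S(x)| < ε}} |S(x)|^α dμ(x) = (δ₀ D / (α + δ₀)) ε^{α+δ₀} (ln(1/ε))^{d₀} + o(ε^{α+δ₀} (ln(1/ε))^{d₀}) as ε → 0⁺. -/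
/-!
Write `F t = μ {|S| < t}`, `L t = log (1 / t)` and `β = α + δ₀`. Fubini applied to
`α s ^ (α - 1) 𝟙{|S x| < s < ε}` gives the layer-cake identity
`∫_{|S| < ε} |S| ^ α dμ = ε ^ α F ε - α ∫₀^ε s ^ (α - 1) F s ds`.
Inserting `F = D t ^ δ₀ L ^ d₀ + o(t ^ δ₀ L ^ d₀)`, the boundary term is
`D ε ^ β L ^ d₀ + o(ε ^ β L ^ d₀)`. Little-o survives integration against a nonnegative
comparison function, and `∫₀^ε s ^ (β - 1) L ^ d ds = ε ^ β L ^ d / β + o(ε ^ β L ^ d)`,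
so the integral term is `D ε ^ β L ^ d₀ / β + o(ε ^ β L ^ d₀)`.
The leading coefficient is `D - α D / β = δ₀ D / β`.
-/

open MeasureTheory Topology Filter Set Asymptotics Real

lemma tendsto_log_one_div_nhdsGT_zero :
    Tendsto (fun t : ℝ => log (1 / t)) (𝓝[>] 0) atTop := by
  simpa only [one_div, Function.comp_def] using tendsto_log_atTop.comp tendsto_inv_nhdsGT_zero

lemma isLittleO_log_one_div_pow (d : ℕ) {p : ℝ} (hp : 0 < p) :
    (fun t : ℝ => log (1 / t) ^ d) =o[𝓝[>] 0] fun t => t ^ (-p) := by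
  refine (isLittleO_abs_log_rpow_rpow_nhdsGT_zero (d : ℝ) (neg_lt_zero.2 hp)).congr' ?_
    EventuallyEq.rfl
  filter_upwards [Ioo_mem_nhdsGT one_pos] with t ht
  rw [rpow_natCast, abs_of_nonpos (log_nonpos ht.1.le ht.2.le), one_div, log_inv]

lemma tendsto_rpow_mul_log_one_div_pow {β : ℝ} (hβ : 0 < β) (d : ℕ) :
    Tendsto (fun t : ℝ => t ^ β * log (1 / t) ^ d) (𝓝[>] 0) (𝓝 0) := by
  rw [← isLittleO_one_iff ℝ]
  refine ((isBigO_refl (fun t : ℝ => t ^ β) _).mul_isLittleO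
    (isLittleO_log_one_div_pow d hβ)).congr' EventuallyEq.rfl ?_
  filter_upwards [self_mem_nhdsWithin] with t (ht : 0 < t)
  rw [← rpow_add ht, add_neg_cancel, rpow_zero]

lemma eventually_nonneg_rpow_mul_log_one_div_pow (r : ℝ) (d : ℕ) :
    ∀ᶠ s in 𝓝[>] (0 : ℝ), 0 ≤ s ^ r * log (1 / s) ^ d := by
  filter_upwards [Ioo_mem_nhdsGT one_pos] with s hs
  exact mul_nonneg (rpow_nonneg hs.1.le _)
    (pow_nonneg (log_nonneg ((one_le_div hs.1).2 hs.2.le)) d)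

lemma integrableAtFilter_rpow_mul_log_one_div_pow {β : ℝ} (hβ : 0 < β) (d : ℕ) :
    IntegrableAtFilter (fun s : ℝ => s ^ (β - 1) * log (1 / s) ^ d) (𝓝[>] 0) := by
  have hO : (fun s : ℝ => s ^ (β - 1) * log (1 / s) ^ d) =O[𝓝[>] 0]
      fun s => s ^ (β / 2 - 1) := by
    refine ((isBigO_refl (fun s : ℝ => s ^ (β - 1)) _).mul
      (isLittleO_log_one_div_pow d (half_pos hβ)).isBigO).congr' EventuallyEq.rfl ?_
    filter_upwards [self_mem_nhdsWithin] with s (hs : 0 < s)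
    rw [← rpow_add hs]
    ring_nf
  refine hO.integrableAtFilter ?_ ⟨Ioo 0 1, Ioo_mem_nhdsGT one_pos,
    (intervalIntegral.integrableOn_Ioo_rpow_iff one_pos).2 (by linarith)⟩
  exact (by fun_prop : Measurable fun s : ℝ => s ^ (β - 1) * log (1 / s) ^ d)
    |>.stronglyMeasurable.stronglyMeasurableAtFilter

lemma hasDerivAt_rpow_mul_log_one_div_pow {β s : ℝ} (hβ : β ≠ 0) (d : ℕ) (hs : 0 < s) :
    HasDerivAt (fun t : ℝ => t ^ β * log (1 / t) ^ d / β)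
      (s ^ (β - 1) * log (1 / s) ^ d - d / β * (s ^ (β - 1) * log (1 / s) ^ (d - 1))) s := by
  simp only [one_div, log_inv]
  refine (((hasDerivAt_rpow_const (Or.inl hs.ne')).mul
    ((hasDerivAt_log hs.ne').neg.pow d)).div_const β).congr_deriv ?_
  have : s ^ β = s ^ (β - 1) * s := by rw [← rpow_add_one hs.ne', sub_add_cancel]
  simp only [this, Pi.pow_apply, Pi.neg_apply]
  field_simp
  ring

lemma eventually_integrableOn_Ioo {E : Type*} [NormedAddCommGroup E] {f : ℝ → E}
    {a : ℝ} (h : IntegrableAtFilter f (𝓝[>] a)) :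
    ∀ᶠ ε in 𝓝[>] a, IntegrableOn f (Ioo a ε) := by
  obtain ⟨t, ht, hf⟩ := h
  obtain ⟨c, hac, hc⟩ := mem_nhdsGT_iff_exists_Ioo_subset.1 ht
  filter_upwards [Ioo_mem_nhdsGT hac] with ε hε
  exact hf.mono_set ((Ioo_subset_Ioo_right hε.2.le).trans hc)

lemma isLittleO_setIntegral_Ioo_of_isLittleO {E : Type*} [NormedAddCommGroup E]
    [NormedSpace ℝ E] {a : ℝ} {φ : ℝ → E} {ψ : ℝ → ℝ} (h : φ =o[𝓝[>] a] ψ)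
    (hψ : IntegrableAtFilter ψ (𝓝[>] a)) (hψ_nonneg : ∀ᶠ s in 𝓝[>] a, 0 ≤ ψ s) :
    (fun ε => ∫ s in Ioo a ε, φ s) =o[𝓝[>] a] fun ε => ∫ s in Ioo a ε, ψ s := by
  rw [isLittleO_iff]
  intro η hη
  obtain ⟨t, ht, hψt⟩ := hψ
  obtain ⟨c, hac, hc⟩ := mem_nhdsGT_iff_exists_Ioo_subset.1
    (((h.def hη).and hψ_nonneg).and ht)
  filter_upwards [Ioo_mem_nhdsGT hac] with ε hε
  have hsub : Ioo a ε ⊆ Ioo a c := Ioo_subset_Ioo_right hε.2.le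
  calc ‖∫ s in Ioo a ε, φ s‖ ≤ ∫ s in Ioo a ε, η * ψ s := by
        refine norm_integral_le_of_norm_le
          ((hψt.mono_set fun s hs => (hc (hsub hs)).2).const_mul η)
          (ae_restrict_of_forall_mem measurableSet_Ioo fun s hs => ?_)
        obtain ⟨⟨hφψ, hψs⟩, -⟩ := hc (hsub hs)
        rwa [norm_of_nonneg hψs] at hφψ
    _ = η * ‖∫ s in Ioo a ε, ψ s‖ := by
        rw [integral_const_mul, norm_of_nonneg (setIntegral_nonneg measurableSet_Ioo
          fun s hs => (hc (hsub hs)).1.2)]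

lemma isLittleO_integral_rpow_mul_log_one_div_pow_sub {β : ℝ} (hβ : 0 < β) (d : ℕ) :
    (fun ε : ℝ => (∫ s in Ioo 0 ε, s ^ (β - 1) * log (1 / s) ^ d)
      - ε ^ β * log (1 / ε) ^ d / β) =o[𝓝[>] 0] fun ε => ε ^ β * log (1 / ε) ^ d := by
  set ψ : ℕ → ℝ → ℝ := fun k s => s ^ (β - 1) * log (1 / s) ^ k with hψ
  -- Integrating by parts trades `ψ d` for `d / β * ψ (d - 1)`, smaller as `log (1 / s) → ∞`.
  have hlower : (fun s => (d : ℝ) / β * ψ (d - 1) s) =o[𝓝[>] 0] ψ d := by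
    rcases d with _ | k
    · simp
    · refine ((isBigO_refl (fun s : ℝ => s ^ (β - 1)) _).mul_isLittleO
        (((isLittleO_pow_pow_atTop_of_lt k.lt_succ_self).comp_tendsto
          tendsto_log_one_div_nhdsGT_zero).const_mul_left ((k + 1 : ℕ) / β))).congr'
        (Eventually.of_forall fun s => ?_) EventuallyEq.rfl
      simp only [hψ, Function.comp_apply, Nat.add_sub_cancel]
      ring
  have hsmall := isLittleO_setIntegral_Ioo_of_isLittleO hlower
    (integrableAtFilter_rpow_mul_log_one_div_pow hβ d)
    (eventually_nonneg_rpow_mul_log_one_div_pow _ d)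
  have hparts : ∀ᶠ ε in 𝓝[>] 0, ∫ s in Ioo 0 ε, (d : ℝ) / β * ψ (d - 1) s
      = (∫ s in Ioo 0 ε, ψ d s) - ε ^ β * log (1 / ε) ^ d / β := by
    filter_upwards [self_mem_nhdsWithin,
      eventually_integrableOn_Ioo (integrableAtFilter_rpow_mul_log_one_div_pow hβ d),
      eventually_integrableOn_Ioo (integrableAtFilter_rpow_mul_log_one_div_pow hβ (d - 1))]
      with ε (hε : 0 < ε) hd hd'
    have hftc := intervalIntegral.integral_eq_sub_of_hasDerivAt_of_tendsto hε
      (fun s hs => hasDerivAt_rpow_mul_log_one_div_pow hβ.ne' d hs.1)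
      ((intervalIntegrable_iff_integrableOn_Ioo_of_le hε.le).2
        (hd.sub (hd'.const_mul ((d : ℝ) / β))))
      (by simpa using (tendsto_rpow_mul_log_one_div_pow hβ d).div_const β)
      ((hasDerivAt_rpow_mul_log_one_div_pow hβ.ne' d hε).continuousAt.tendsto.mono_left
        nhdsWithin_le_nhds)
    rw [intervalIntegral.integral_of_le hε.le, integral_Ioc_eq_integral_Ioo,
      integral_sub hd (hd'.const_mul _), sub_zero] at hftc
    linarith
  have hrem := hsmall.congr' hparts EventuallyEq.rfl
  refine hrem.trans_isBigO (hrem.right_isBigO_sub.trans ?_)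
  refine (isBigO_const_mul_self β⁻¹ (fun ε : ℝ => ε ^ β * log (1 / ε) ^ d) _).congr'
    (Eventually.of_forall fun ε => ?_) EventuallyEq.rfl
  simp only [hψ]
  ring

lemma integral_Ioo_mul_rpow_sub_one {a b : ℝ} (ha : 0 < a) (hab : a ≤ b) (α : ℝ) :
    ∫ s in Ioo a b, α * s ^ (α - 1) = b ^ α - a ^ α := by
  have hpos : ∀ s ∈ uIcc a b, 0 < s := fun s hs => ha.trans_le (uIcc_of_le hab ▸ hs).1
  rw [← integral_Ioc_eq_integral_Ioo, ← intervalIntegral.integral_of_le hab]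
  refine intervalIntegral.integral_eq_sub_of_hasDerivAt
    (fun s hs => hasDerivAt_rpow_const (Or.inl (hpos s hs).ne')) ?_
  exact (continuousOn_const.mul (continuousOn_id.rpow_const fun s hs =>
    Or.inl (hpos s hs).ne')).intervalIntegrable

lemma setIntegral_Ioi_indicator_Ioo_mul_rpow_sub_one {a : ℝ} (ha : 0 < a) (ε α : ℝ) :
    ∫ s in Ioi a, (Ioo 0 ε).indicator (fun s => α * s ^ (α - 1)) s
      = (Iio ε).indicator (fun a => ε ^ α - a ^ α) a := by
  rw [setIntegral_indicator measurableSet_Ioo]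
  by_cases haε : a < ε
  · have : Ioi a ∩ Ioo 0 ε = Ioo a ε := by
      ext s
      simp only [mem_inter_iff, mem_Ioi, mem_Ioo]
      exact ⟨fun h => ⟨h.1, h.2.2⟩, fun h => ⟨h.1, ha.trans h.1, h.2⟩⟩
    rw [indicator_of_mem (mem_Iio.2 haε), this, integral_Ioo_mul_rpow_sub_one ha haε.le]
  · have : Ioi a ∩ Ioo 0 ε = ∅ := by
      ext s
      simp only [mem_inter_iff, mem_Ioi, mem_Ioo, mem_empty_iff_false, iff_false]
      exact fun h => haε (h.1.trans h.2.2)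
    rw [indicator_of_notMem (notMem_Iio.2 (not_lt.1 haε)), this, Measure.restrict_empty,
      integral_zero_measure]

section Sublevel

variable {X : Type*} [MeasurableSpace X] {μ : Measure X} {f : X → ℝ}

lemma integral_indicator_setOf_lt_snd (hf : Measurable f) (g : ℝ → ℝ) (s : ℝ) :
    ∫ x, {p : X × ℝ | f p.1 < p.2}.indicator (fun p => g p.2) (x, s) ∂μ
      = μ.real {x | f x < s} * g s :=
  integral_indicator_const (g s) (measurableSet_lt hf measurable_const)

lemma ae_pos_of_tendsto_measureReal_lt [IsFiniteMeasure μ]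
    (h : Tendsto (fun t => μ.real {x | f x < t}) (𝓝[>] 0) (𝓝 0)) : ∀ᵐ x ∂μ, 0 < f x := by
  have hle : μ.real {x | f x ≤ 0} ≤ 0 := by
    refine ge_of_tendsto h ?_
    filter_upwards [self_mem_nhdsWithin] with t (ht : 0 < t)
    exact measureReal_mono fun x (hx : f x ≤ 0) => hx.trans_lt ht
  simp only [ae_iff, not_lt]
  exact (measureReal_eq_zero_iff).1 (le_antisymm hle measureReal_nonneg)

lemma setIntegral_rpow_sublevel_eq [IsFiniteMeasure μ] (hf : Measurable f)
    (hpos : ∀ᵐ x ∂μ, 0 < f x) (α : ℝ) {ε : ℝ}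
    (hint : IntegrableOn (fun s => s ^ (α - 1) * μ.real {x | f x < s}) (Ioo 0 ε)) :
    ∫ x in {x | f x < ε}, f x ^ α ∂μ
      = ε ^ α * μ.real {x | f x < ε}
        - α * ∫ s in Ioo 0 ε, s ^ (α - 1) * μ.real {x | f x < s} := by
  set k : ℝ → ℝ := (Ioo 0 ε).indicator fun s => α * s ^ (α - 1) with hk
  set K : X × ℝ → ℝ := {p | f p.1 < p.2}.indicator fun p => k p.2 with hK
  have hsublevel : MeasurableSet {x | f x < ε} := measurableSet_lt hf measurable_const
  have hK_meas : Measurable K :=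
    (((by fun_prop : Measurable fun s : ℝ => α * s ^ (α - 1)).indicator
      measurableSet_Ioo).comp measurable_snd).indicator
      (measurableSet_lt (hf.comp measurable_fst) measurable_snd)
  have hfiber : ∀ s, ∫ x, K (x, s) ∂μ
      = (Ioo 0 ε).indicator (fun s => α * (s ^ (α - 1) * μ.real {x | f x < s})) s := by
    intro s
    rw [integral_indicator_setOf_lt_snd hf k s]
    by_cases hs : s ∈ Ioo 0 ε
    · simp only [hk, indicator_of_mem hs]
      ring
    · simp only [hk, indicator_of_notMem hs, mul_zero]
  have hK_int : Integrable K (μ.prod volume) := by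
    refine (integrable_prod_iff' hK_meas.aestronglyMeasurable).2
      ⟨ae_of_all _ fun s => (integrable_const (k s)).indicator
        (measurableSet_lt hf measurable_const), ?_⟩
    have hnorm : ∀ s, ∫ x, ‖K (x, s)‖ ∂μ = ‖∫ x, K (x, s) ∂μ‖ := by
      intro s
      simp only [hK, norm_indicator_eq_indicator_norm]
      rw [integral_indicator_setOf_lt_snd hf (fun s => ‖k s‖) s,
        integral_indicator_setOf_lt_snd hf k s, norm_mul, norm_of_nonneg measureReal_nonneg]
    simp_rw [hnorm, hfiber]
    exact ((integrable_indicator_iff measurableSet_Ioo).2 (hint.const_mul α)).norm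
  have hsection : ∀ᵐ x ∂μ,
      ∫ s, K (x, s) = {x | f x < ε}.indicator (fun x => ε ^ α - f x ^ α) x := by
    filter_upwards [hpos] with x hx
    change ∫ s, (Ioi (f x)).indicator k s = _
    rw [integral_indicator measurableSet_Ioi, hk]
    exact setIntegral_Ioi_indicator_Ioo_mul_rpow_sub_one hx ε α
  have hdiff_int : IntegrableOn (fun x => ε ^ α - f x ^ α) {x | f x < ε} μ :=
    (integrable_indicator_iff hsublevel).1 (hK_int.integral_prod_left.congr hsection)
  have hswap := integral_integral_swap (f := fun x s => K (x, s)) hK_int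
  simp only [integral_congr_ae hsection, integral_indicator hsublevel, hfiber,
    integral_indicator measurableSet_Ioo, integral_const_mul] at hswap
  calc ∫ x in {x | f x < ε}, f x ^ α ∂μ
      = ∫ x in {x | f x < ε}, (ε ^ α - (ε ^ α - f x ^ α)) ∂μ := by
        simp only [sub_sub_cancel]
    _ = _ := by
      rw [integral_sub (integrable_const _) hdiff_int, setIntegral_const, smul_eq_mul, hswap,
        mul_comm]

end Sublevel

section Transfer

variable {F : ℝ → ℝ} {D δ : ℝ} {d : ℕ}

lemma isLittleO_rpow_mul_sub
    (h : (fun t => F t - D * t ^ δ * log (1 / t) ^ d) =o[𝓝[>] 0]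
      fun t => t ^ δ * log (1 / t) ^ d) (a : ℝ) :
    (fun t => t ^ a * F t - D * (t ^ (a + δ) * log (1 / t) ^ d)) =o[𝓝[>] 0]
      fun t => t ^ (a + δ) * log (1 / t) ^ d := by
  refine ((isBigO_refl (fun t : ℝ => t ^ a) _).mul_isLittleO h).congr' ?_ ?_ <;>
    filter_upwards [self_mem_nhdsWithin] with t (ht : 0 < t) <;> rw [rpow_add ht] <;> ring

lemma integrableAtFilter_rpow_mul_of_isLittleO (hFm : Measurable F) {α : ℝ} (hβ : 0 < α + δ)
    (h : (fun t => F t - D * t ^ δ * log (1 / t) ^ d) =o[𝓝[>] 0]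
      fun t => t ^ δ * log (1 / t) ^ d) :
    IntegrableAtFilter (fun s => s ^ (α - 1) * F s) (𝓝[>] 0) := by
  have hφ := isLittleO_rpow_mul_sub h (α - 1)
  rw [show α - 1 + δ = α + δ - 1 by ring] at hφ
  refine ((hφ.isBigO.add (isBigO_const_mul_self D _ _)).congr_left fun s => sub_add_cancel _ _)
    |>.integrableAtFilter ?_ (integrableAtFilter_rpow_mul_log_one_div_pow hβ d)
  exact (by fun_prop : Measurable fun s : ℝ => s ^ (α - 1) * F s)
    |>.stronglyMeasurable.stronglyMeasurableAtFilter

lemma isLittleO_setIntegral_rpow_mul_sub (hFm : Measurable F) {α : ℝ} (hβ : 0 < α + δ)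
    (h : (fun t => F t - D * t ^ δ * log (1 / t) ^ d) =o[𝓝[>] 0]
      fun t => t ^ δ * log (1 / t) ^ d) :
    (fun ε => (∫ s in Ioo 0 ε, s ^ (α - 1) * F s)
      - D / (α + δ) * (ε ^ (α + δ) * log (1 / ε) ^ d)) =o[𝓝[>] 0]
      fun ε => ε ^ (α + δ) * log (1 / ε) ^ d := by
  have hφ := isLittleO_rpow_mul_sub h (α - 1)
  rw [show α - 1 + δ = α + δ - 1 by ring] at hφ
  have hE := isLittleO_setIntegral_Ioo_of_isLittleO hφ
    (integrableAtFilter_rpow_mul_log_one_div_pow hβ d)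
    (eventually_nonneg_rpow_mul_log_one_div_pow _ d)
  have hM := isLittleO_integral_rpow_mul_log_one_div_pow_sub hβ d
  have hMO : (fun ε => ∫ s in Ioo 0 ε, s ^ (α + δ - 1) * log (1 / s) ^ d) =O[𝓝[>] 0]
      fun ε => ε ^ (α + δ) * log (1 / ε) ^ d :=
    (hM.isBigO.add (isBigO_const_mul_self (α + δ)⁻¹ _ _)).congr_left fun ε => by ring
  refine ((hE.trans_isBigO hMO).add (hM.const_mul_left D)).congr' ?_ EventuallyEq.rfl
  filter_upwards
    [eventually_integrableOn_Ioo (integrableAtFilter_rpow_mul_of_isLittleO hFm hβ h),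
    eventually_integrableOn_Ioo (integrableAtFilter_rpow_mul_log_one_div_pow hβ d)]
    with ε hφi hψi
  rw [integral_sub hφi (hψi.const_mul D), integral_const_mul]
  ring

end Transfer

theorem stmt_13_general {X : Type*} [MeasurableSpace X] (μ : Measure X) [IsFiniteMeasure μ]
    (S : X → ℝ) (hS : Measurable S)
    (D δ₀ : ℝ) (d₀ : ℕ) (hδ₀ : 0 < δ₀)
    (hasymp : (fun t : ℝ => (μ {x | |S x| < t}).toReal -
        D * t ^ δ₀ * Real.log (1 / t) ^ d₀) =o[𝓝[>] 0]
      fun t : ℝ => t ^ δ₀ * Real.log (1 / t) ^ d₀)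
    (α : ℝ) (hα : -δ₀ < α) :
    (fun ε : ℝ => (∫ x in {x | |S x| < ε}, |S x| ^ α ∂μ) -
        δ₀ * D / (α + δ₀) * ε ^ (α + δ₀) * Real.log (1 / ε) ^ d₀) =o[𝓝[>] 0]
      fun ε : ℝ => ε ^ (α + δ₀) * Real.log (1 / ε) ^ d₀ := by
  set F : ℝ → ℝ := fun t => μ.real {x | |S x| < t}
  have hFm : Measurable F :=
    Monotone.measurable fun s t hst => measureReal_mono fun x (hx : |S x| < s) => hx.trans_le hst
  have hβ : 0 < α + δ₀ := by linarith
  have hpos : ∀ᵐ x ∂μ, 0 < |S x| := by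
    refine ae_pos_of_tendsto_measureReal_lt
      (((hasymp.isBigO.add (isBigO_const_mul_self D _ _)).congr_left fun t => ?_).trans_tendsto
        (tendsto_rpow_mul_log_one_div_pow hδ₀ d₀))
    rw [measureReal_def]
    ring
  have hlayer :=
    eventually_integrableOn_Ioo (integrableAtFilter_rpow_mul_of_isLittleO hFm hβ hasymp) |>.mono
      fun ε hε => setIntegral_rpow_sublevel_eq hS.abs hpos α hε
  refine ((isLittleO_rpow_mul_sub hasymp α).sub
    ((isLittleO_setIntegral_rpow_mul_sub hFm hβ hasymp).const_mul_left α)).congr' ?_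
    EventuallyEq.rfl
  filter_upwards [hlayer] with ε hε
  rw [hε]
  simp only [F, measureReal_def]
  field_simp
  ring

/-- The computation (6.2) of Section 6: asymptotics `μ{|S|<t} = D t^{δ₀}(ln(1/t))^{d₀} + o(...)`
of the distribution function yield asymptotics
`∫_{|S|<ε} |S|^α dμ = (δ₀ D/(α+δ₀)) ε^{α+δ₀}(ln(1/ε))^{d₀} + o(...)`. -/
theorem stmt_13 {X : Type*} [MeasurableSpace X] (μ : Measure X) [IsFiniteMeasure μ]
    (S : X → ℝ) (hS : Measurable S)
    (D δ₀ : ℝ) (d₀ : ℕ) (hD : 0 < D) (hδ₀ : 0 < δ₀) (hd₀ : d₀ ≤ 1)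
    (hasymp : (fun t : ℝ => (μ {x | |S x| < t}).toReal -
        D * t ^ δ₀ * Real.log (1 / t) ^ d₀) =o[𝓝[>] 0]
      fun t : ℝ => t ^ δ₀ * Real.log (1 / t) ^ d₀)
    (α : ℝ) (hα : -δ₀ < α) :
    (fun ε : ℝ => (∫ x in {x | |S x| < ε}, |S x| ^ α ∂μ) -
        δ₀ * D / (α + δ₀) * ε ^ (α + δ₀) * Real.log (1 / ε) ^ d₀) =o[𝓝[>] 0]
      fun ε : ℝ => ε ^ (α + δ₀) * Real.log (1 / ε) ^ d₀ :=
  stmt_13_general μ S hS D δ₀ d₀ hδ₀ hasymp α hα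
end
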